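/- (Corollary: the simple function f_p approximates f.) Suppose 0 < v^{1/3} < 1. Let K ≥ 1, b = KΔ, and set y_k := (k−1)Δ for k = 1,…,K+1. Let 0 = t_1 < t_2 < ⋯ < t_p < Δ − v^{1/3} and t_{p+1} := Δ. Let f : [0,b] → ℝ be bounded with |f| ≤ G and Lipschitz with constant L. Define the simple function f_p by f_p(x) := 𝔼[ f(y_ℓ + |((Z−t_n) mod 2Δ) − Δ|) | Z ≥ t_n ] for x ∈ [y_ℓ + t_n, y_ℓ + t_{n+1}), ℓ = 1,…,K, n = 1,…,p. Then for every ℓ and n and every x ∈ [y_ℓ + t_n, y_ℓ + t_{n+1}), |f_p(x) − f(y_ℓ + t_n)| ≤ (2G + L) · v^{1/3} / (1 − v^{1/3}). -/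

import Mathlib

/-!
Let `ε = v^{1/3}` and `B = {|Z - Δ| < ε}`. By Chebyshev, `ℙ(Bᶜ) ≤ v / ε² = ε`, and since
`t_n < Δ - ε` the event `B` lies inside `{Z ≥ t_n}`, so `ℙ(Z ≥ t_n) ≥ 1 - ε`. On `B` the fold
`z ↦ |((z - t_n) mod 2Δ) - Δ|` sends `Z` to within `|Z - Δ| < ε` of `t_n`, so there the integrand
differs from `f(y_ℓ + t_n)` by at most `Lε`; off `B` it differs by at most `2G`. Averaging over
`{Z ≥ t_n}` gives the bound `(Lε + 2Gε) / (1 - ε)`.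
-/

open MeasureTheory ProbabilityTheory

/-- The representative of `x` modulo `2Δ` lying in `[0, 2Δ)`. -/
noncomputable def rmod (Δ x : ℝ) : ℝ := 2 * Δ * Int.fract (x / (2 * Δ))

lemma measurable_rmod (Δ : ℝ) : Measurable (rmod Δ) :=
  measurable_const.mul (measurable_fract.comp (measurable_id.div_const _))

lemma rmod_nonneg {Δ : ℝ} (hΔ : 0 ≤ Δ) (x : ℝ) : 0 ≤ rmod Δ x :=
  mul_nonneg (by linarith) (Int.fract_nonneg _)

lemma rmod_le {Δ : ℝ} (hΔ : 0 ≤ Δ) (x : ℝ) : rmod Δ x ≤ 2 * Δ :=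
  mul_le_of_le_one_right (by linarith) (Int.fract_lt_one _).le

lemma abs_rmod_sub_le {Δ : ℝ} (hΔ : 0 ≤ Δ) (x : ℝ) : |rmod Δ x - Δ| ≤ Δ :=
  abs_le.2 ⟨by linarith [rmod_nonneg hΔ x], by linarith [rmod_le hΔ x]⟩

lemma rmod_eq_self {Δ x : ℝ} (hx₀ : 0 ≤ x) (hx : x < 2 * Δ) : rmod Δ x = x := by
  have h2Δ : 0 < 2 * Δ := hx₀.trans_lt hx
  have hΔ : Δ ≠ 0 := by linarith
  rw [rmod, Int.fract_eq_self.2 ⟨div_nonneg hx₀ h2Δ.le, (div_lt_one h2Δ).2 hx⟩]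
  field_simp

lemma abs_abs_rmod_sub_sub_le {Δ s z : ℝ} (hs : 0 ≤ s) (hz : s + |z - Δ| < Δ) :
    |(|rmod Δ (z - s) - Δ|) - s| ≤ |z - Δ| := by
  have hz' := abs_lt.1 (show |z - Δ| < Δ - s by linarith)
  rw [rmod_eq_self (by linarith) (by linarith)]
  calc |(|z - s - Δ|) - s| = |(|z - s - Δ|) - (|-s|)| := by rw [abs_neg, abs_of_nonneg hs]
    _ ≤ |z - s - Δ - -s| := abs_abs_sub_abs_le_abs_sub _ _
    _ = |z - Δ| := by ring_nf

section ConditionalAverage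

variable {Ω : Type*} [MeasurableSpace Ω] {μ : Measure Ω} [IsProbabilityMeasure μ]
  {A B : Set Ω} {g : Ω → ℝ} {a c M ε : ℝ}

lemma abs_setIntegral_sub_const_le (hA : MeasurableSet A) (hB : MeasurableSet B) (hBA : B ⊆ A)
    (hg : IntegrableOn g A μ) (ha : 0 ≤ a) (hM : 0 ≤ M) (hgood : ∀ ω ∈ B, |g ω - c| ≤ a)
    (hbad : ∀ ω ∈ A, |g ω - c| ≤ M) (hBc : μ.real Bᶜ ≤ ε) :
    |∫ ω in A, (g ω - c) ∂μ| ≤ a + M * ε := by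
  have hgc : IntegrableOn (fun ω => g ω - c) A μ := hg.sub (integrableOn_const ..)
  rw [← Set.union_sdiff_cancel hBA, setIntegral_union Set.disjoint_sdiff_right (hA.diff hB)
    (hgc.mono_set hBA) (hgc.mono_set Set.sdiff_subset)]
  calc _ ≤ ‖∫ ω in B, (g ω - c) ∂μ‖ + ‖∫ ω in A \ B, (g ω - c) ∂μ‖ := abs_add_le _ _
    _ ≤ a * μ.real B + M * μ.real (A \ B) :=
      add_le_add (norm_setIntegral_le_of_norm_le_const (measure_lt_top _ _) hgood)
        (norm_setIntegral_le_of_norm_le_const (measure_lt_top _ _)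
          fun ω hω => hbad ω hω.1)
    _ ≤ a * 1 + M * ε := by
      gcongr
      · exact measureReal_le_one
      · exact (measureReal_mono (Set.sdiff_subset_compl A B)).trans hBc
    _ = a + M * ε := by ring

lemma abs_setIntegral_div_sub_const_le (hA : MeasurableSet A) (hB : MeasurableSet B)
    (hBA : B ⊆ A) (hg : IntegrableOn g A μ) (ha : 0 ≤ a) (hM : 0 ≤ M)
    (hgood : ∀ ω ∈ B, |g ω - c| ≤ a) (hbad : ∀ ω ∈ A, |g ω - c| ≤ M) (hBc : μ.real Bᶜ ≤ ε)
    (hε : ε < 1) :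
    |(∫ ω in A, g ω ∂μ) / μ.real A - c| ≤ (a + M * ε) / (1 - ε) := by
  have hA_ge : 1 - ε ≤ μ.real A := by
    rw [probReal_compl_eq_one_sub hB] at hBc
    linarith [measureReal_mono hBA (μ := μ)]
  have hA_pos : 0 < μ.real A := by linarith
  have hε₀ : 0 ≤ ε := measureReal_nonneg.trans hBc
  have hcentre : (∫ ω in A, g ω ∂μ) / μ.real A - c = (∫ ω in A, (g ω - c) ∂μ) / μ.real A := by
    rw [integral_sub hg (integrableOn_const ..), setIntegral_const, smul_eq_mul]
    field_simp
  rw [hcentre, abs_div, abs_of_pos hA_pos]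
  exact div_le_div₀ (by positivity) (abs_setIntegral_sub_const_le hA hB hBA hg ha hM hgood hbad hBc)
    (by linarith) hA_ge

end ConditionalAverage

lemma measureReal_abs_sub_integral_ge_le {Ω : Type*} [MeasurableSpace Ω] {μ : Measure Ω}
    [IsFiniteMeasure μ] {X : Ω → ℝ} (hX : MemLp X 2 μ) {ε : ℝ} (hε : 0 < ε)
    (hvar : variance X μ ≤ ε ^ 3) :
    μ.real {ω | ε ≤ |X ω - μ[X]|} ≤ ε := by
  have hvar' : variance X μ / ε ^ 2 ≤ ε := by
    rw [div_le_iff₀ (by positivity)]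
    linarith
  exact ENNReal.toReal_le_of_le_ofReal hε.le
    ((meas_ge_le_variance_div_sq hX hε).trans (ENNReal.ofReal_le_ofReal hvar'))

open Set in
lemma abs_setIntegral_fold_div_sub_le {Ω : Type*} [MeasurableSpace Ω] {μ : Measure Ω}
    [IsProbabilityMeasure μ] {Z : Ω → ℝ} (hZ : Measurable Z) (hZ₂ : MemLp Z 2 μ)
    {Δ ε s y₀ G L : ℝ} {f : ℝ → ℝ} (hΔ : μ[Z] = Δ) (hε₀ : 0 < ε) (hε₁ : ε < 1)
    (hvar : variance Z μ ≤ ε ^ 3) (hs : 0 ≤ s) (hsΔ : s < Δ - ε) (hf : Measurable f)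
    (hG : ∀ x ∈ Icc y₀ (y₀ + Δ), |f x| ≤ G)
    (hL : ∀ x ∈ Icc y₀ (y₀ + Δ), ∀ x' ∈ Icc y₀ (y₀ + Δ), |f x - f x'| ≤ L * |x - x'|) :
    |(∫ ω in {ω | s ≤ Z ω}, f (y₀ + |rmod Δ (Z ω - s) - Δ|) ∂μ) / μ.real {ω | s ≤ Z ω}
        - f (y₀ + s)| ≤ (2 * G + L) * ε / (1 - ε) := by
  have hΔ₀ : 0 < Δ := by linarith
  have hfold_mem (z : ℝ) : y₀ + |rmod Δ z - Δ| ∈ Icc y₀ (y₀ + Δ) :=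
    ⟨by linarith [abs_nonneg (rmod Δ z - Δ)], by linarith [abs_rmod_sub_le hΔ₀.le z]⟩
  have hs_mem : y₀ + s ∈ Icc y₀ (y₀ + Δ) := ⟨by linarith, by linarith⟩
  have hG₀ : 0 ≤ G := (abs_nonneg _).trans (hG _ hs_mem)
  have hL₀ : 0 ≤ L := by
    have h := (abs_nonneg _).trans (hL (y₀ + Δ) ⟨by linarith, le_rfl⟩ y₀ ⟨le_rfl, by linarith⟩)
    exact nonneg_of_mul_nonneg_left h (by simpa [abs_of_pos hΔ₀] using hΔ₀)
  have hBc : μ.real {ω | |Z ω - Δ| < ε}ᶜ ≤ ε := by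
    simpa only [compl_ofPred, not_lt, hΔ] using measureReal_abs_sub_integral_ge_le hZ₂ hε₀ hvar
  have hA : MeasurableSet {ω | s ≤ Z ω} := measurableSet_le measurable_const hZ
  have hB : MeasurableSet {ω | |Z ω - Δ| < ε} :=
    measurableSet_lt (hZ.sub_const Δ).abs measurable_const
  have hBA : {ω | |Z ω - Δ| < ε} ⊆ {ω | s ≤ Z ω} := fun ω (hω : |Z ω - Δ| < ε) =>
    show s ≤ Z ω by linarith [(abs_lt.1 hω).1]
  have hg : Integrable (fun ω => f (y₀ + |rmod Δ (Z ω - s) - Δ|)) μ := by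
    refine .of_bound (hf.comp ?_).aestronglyMeasurable G
      (ae_of_all _ fun ω => by simpa using hG _ (hfold_mem _))
    exact measurable_const.add (((measurable_rmod Δ).comp (hZ.sub_const s)).sub_const Δ).abs
  refine (abs_setIntegral_div_sub_const_le (a := L * ε) (M := 2 * G) hA hB hBA hg.integrableOn
    (by positivity) (by positivity) ?_ ?_ hBc hε₁).trans_eq (by ring)
  · intro ω (hω : |Z ω - Δ| < ε)
    calc _ ≤ L * |y₀ + |rmod Δ (Z ω - s) - Δ| - (y₀ + s)| := hL _ (hfold_mem _) _ hs_mem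
      _ ≤ L * ε := by
        gcongr
        rw [add_sub_add_left_eq_sub]
        exact (abs_abs_rmod_sub_sub_le hs (by linarith)).trans hω.le
  · intro ω _
    linarith [abs_sub (f (y₀ + |rmod Δ (Z ω - s) - Δ|)) (f (y₀ + s)),
      hG _ (hfold_mem (Z ω - s)), hG _ hs_mem]

theorem simple_function_approximates_general
    {Ω : Type*} [MeasureSpace Ω] [IsProbabilityMeasure (ℙ : Measure Ω)]
    (Z : Ω → ℝ) (hZmeas : Measurable Z)
    (hZsq : Integrable (fun ω => (Z ω) ^ 2))
    (Δ v : ℝ) (hΔ : Δ = ∫ ω, Z ω)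
    (hv : v = variance Z ℙ) (hvpos : 0 < v) (hvlt : v ^ ((1 : ℝ) / 3) < 1)
    (K : ℕ) (b : ℝ) (hb : b = (K : ℝ) * Δ)
    (y : ℕ → ℝ) (hy : ∀ k, y k = ((k : ℝ) - 1) * Δ)
    (p : ℕ) (t : ℕ → ℝ)
    (ht1 : t 1 = 0)
    (htmono : ∀ m ∈ Set.Icc 1 p, ∀ n ∈ Set.Icc 1 p, m < n → t m < t n)
    (htp : t p < Δ - v ^ ((1 : ℝ) / 3))
    (f : ℝ → ℝ) (hfmeas : Measurable f)
    (G L : ℝ)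
    (hG : ∀ x ∈ Set.Icc (0 : ℝ) b, |f x| ≤ G)
    (hL : ∀ x ∈ Set.Icc (0 : ℝ) b, ∀ x' ∈ Set.Icc (0 : ℝ) b, |f x - f x'| ≤ L * |x - x'|)
    (fp : ℝ → ℝ)
    (hfp : ∀ ℓ ∈ Set.Icc 1 K, ∀ n ∈ Set.Icc 1 p,
      ∀ x ∈ Set.Ico (y ℓ + t n) (y ℓ + t (n + 1)),
        fp x = (∫ ω in {ω | t n ≤ Z ω}, f (y ℓ + |rmod Δ (Z ω - t n) - Δ|))
                  / (ℙ {ω | t n ≤ Z ω}).toReal) :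
    ∀ ℓ ∈ Set.Icc 1 K, ∀ n ∈ Set.Icc 1 p,
      ∀ x ∈ Set.Ico (y ℓ + t n) (y ℓ + t (n + 1)),
        |fp x - f (y ℓ + t n)|
          ≤ (2 * G + L) * v ^ ((1 : ℝ) / 3) / (1 - v ^ ((1 : ℝ) / 3)) := by
  intro ℓ hℓ n hn x hx
  set ε := v ^ ((1 : ℝ) / 3) with hε
  have hε₀ : 0 < ε := Real.rpow_pos_of_pos hvpos _
  have hvar : variance Z ℙ ≤ ε ^ 3 := by
    rw [hε, ← hv, one_div, ← Nat.cast_ofNat, Real.rpow_inv_natCast_pow hvpos.le three_ne_zero]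
  have ht_mono : MonotoneOn t (Set.Icc 1 p) := StrictMonoOn.monotoneOn htmono
  have htn₀ : 0 ≤ t n := ht1 ▸ ht_mono ⟨le_rfl, hn.1.trans hn.2⟩ hn hn.1
  have htn : t n < Δ - ε := (ht_mono hn ⟨hn.1.trans hn.2, le_rfl⟩ hn.2).trans_lt htp
  have hcell : Set.Icc (y ℓ) (y ℓ + Δ) ⊆ Set.Icc 0 b := by
    have hℓ₁ : (1 : ℝ) ≤ ℓ := by exact_mod_cast hℓ.1
    have hℓK : (ℓ : ℝ) ≤ K := by exact_mod_cast hℓ.2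
    rintro z ⟨hz₀, hz₁⟩
    rw [hy] at hz₀ hz₁
    constructor <;> nlinarith
  rw [hfp ℓ hℓ n hn x hx]
  exact abs_setIntegral_fold_div_sub_le hZmeas
    ((memLp_two_iff_integrable_sq hZmeas.aestronglyMeasurable).2 hZsq) hΔ.symm hε₀ hvlt hvar
    htn₀ htn hfmeas (fun z hz => hG z (hcell hz)) fun z hz z' hz' => hL z (hcell hz) z' (hcell hz')

/-- the simple function `f_p` approximates `f`:
on each cell `[y_ℓ + t_n, y_ℓ + t_{n+1})` the value of the simple function
`f_p(x) = 𝔼[f(y_ℓ + |((Z - t_n) mod 2Δ) - Δ|) ∣ Z ≥ t_n]` is within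
`(2G + L)·v^{1/3}/(1 - v^{1/3})` of `f(y_ℓ + t_n)`. -/
theorem simple_function_approximates
    {Ω : Type*} [MeasureSpace Ω] [IsProbabilityMeasure (ℙ : Measure Ω)]
    (Z : Ω → ℝ) (hZmeas : Measurable Z)
    (hZnn : ∀ᵐ ω ∂ℙ, 0 ≤ Z ω)
    (hZint : Integrable Z) (hZsq : Integrable (fun ω => (Z ω) ^ 2))
    (Δ v : ℝ) (hΔ : Δ = ∫ ω, Z ω) (hΔpos : 0 < Δ)
    (hv : v = variance Z ℙ) (hvpos : 0 < v) (hvlt : v ^ ((1 : ℝ) / 3) < 1)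
    (K : ℕ) (hK : 1 ≤ K) (b : ℝ) (hb : b = (K : ℝ) * Δ)
    (y : ℕ → ℝ) (hy : ∀ k, y k = ((k : ℝ) - 1) * Δ)
    (p : ℕ) (hp : 1 ≤ p) (t : ℕ → ℝ)
    (ht1 : t 1 = 0)
    (htmono : ∀ m ∈ Set.Icc 1 p, ∀ n ∈ Set.Icc 1 p, m < n → t m < t n)
    (htp : t p < Δ - v ^ ((1 : ℝ) / 3))
    (htp1 : t (p + 1) = Δ)
    (f : ℝ → ℝ) (hfmeas : Measurable f)
    (G L : ℝ)
    (hG : ∀ x ∈ Set.Icc (0 : ℝ) b, |f x| ≤ G)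
    (hL : ∀ x ∈ Set.Icc (0 : ℝ) b, ∀ x' ∈ Set.Icc (0 : ℝ) b, |f x - f x'| ≤ L * |x - x'|)
    (fp : ℝ → ℝ)
    (hfp : ∀ ℓ ∈ Set.Icc 1 K, ∀ n ∈ Set.Icc 1 p,
      ∀ x ∈ Set.Ico (y ℓ + t n) (y ℓ + t (n + 1)),
        fp x = (∫ ω in {ω | t n ≤ Z ω}, f (y ℓ + |rmod Δ (Z ω - t n) - Δ|))
                  / (ℙ {ω | t n ≤ Z ω}).toReal) :
    ∀ ℓ ∈ Set.Icc 1 K, ∀ n ∈ Set.Icc 1 p,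
      ∀ x ∈ Set.Ico (y ℓ + t n) (y ℓ + t (n + 1)),
        |fp x - f (y ℓ + t n)|
          ≤ (2 * G + L) * v ^ ((1 : ℝ) / 3) / (1 - v ^ ((1 : ℝ) / 3)) :=
  simple_function_approximates_general Z hZmeas hZsq Δ v hΔ hv hvpos hvlt K b hb y hy p t ht1 htmono
    htp f hfmeas G L hG hL fp hfp
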